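/- arXiv:1609.00450 — 5 statements merged into one kernel-verified Lean document; each statement's English description precedes it below -/
import Mathlib

section
/- The cubic 4t^3 − λ^2 t^2 + 18λt + (27 − 4λ^3) in t has a repeated root (over ℂ) if and only if λ^3 + 27 = 0. -/
open Polynomial

theorem stmt_3 (l : ℂ) :
    (∃ α : ℂ,
        (C 4 * X ^ 3 - C (l ^ 2) * X ^ 2 + C (18 * l) * X + C (27 - 4 * l ^ 3) :
          Polynomial ℂ).eval α = 0 ∧
        (Polynomial.derivative
          (C 4 * X ^ 3 - C (l ^ 2) * X ^ 2 + C (18 * l) * X + C (27 - 4 * l ^ 3) :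
            Polynomial ℂ)).eval α = 0) ↔
      l ^ 3 + 27 = 0 := by
  constructor
  · rintro ⟨α, hp, hp'⟩
    simp only [derivative_add, derivative_sub, derivative_mul, derivative_C, derivative_X_pow,
      derivative_X, eval_add, eval_sub, eval_mul, eval_pow, eval_C, eval_X, eval_natCast, Polynomial.eval_ofNat, Polynomial.derivative_ofNat, eval_zero,
      zero_mul, mul_one, zero_add, map_ofNat] at hp hp'
    have h1 : (432*l - 2*l^4)*α + (972 - 126*l^3) = 0 := by
      linear_combination 36*hp - (12*α - l^2)*hp'
    have h2 : (l^3 + 27)^3 = 0 := by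
      linear_combination ((432*l-2*l^4)^2/576) * hp' -
        ((12*((432*l-2*l^4)*α - (972-126*l^3)) + 2*l^2*(432*l-2*l^4))/576) * h1 - (l^3*(l^3-216)/72) * h1
    have := pow_eq_zero_iff (n := 3) (by norm_num) |>.mp h2
    exact this
  · intro hl
    refine ⟨l^2/3, ?_, ?_⟩
    · simp only [eval_add, eval_sub, eval_mul, eval_pow, eval_C, eval_X]
      linear_combination ((l^3+27)/27) * hl
    · simp only [derivative_add, derivative_sub, derivative_mul, derivative_C, derivative_X_pow,
        derivative_X, eval_add, eval_sub, eval_mul, eval_pow, eval_C, eval_X, Polynomial.eval_ofNat, Polynomial.derivative_ofNat, eval_zero,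
        zero_mul, mul_one, zero_add, map_ofNat]
      linear_combination (2*l/3) * hl
end

section
/- The subgroup of SL_2(ℂ) generated by the matrices [[i,0],[0,−i]] and (1/2)[[i−1, i−1],[i+1, −(i+1)]] has order 24 (it is the binary tetrahedral group A_4^{SL_2}). -/
/-!
Under the embedding `a + b i + c j + d k ↦ !![a + b I, c + d I; -c + d I, a - b I]` of the
rational quaternions into `Matrix (Fin 2) (Fin 2) ℂ`, the matrices `A` and `B` are the images of
`i` and of `ω = (-1 + i - j + k) / 2`. So the group generated by `A` and `B` is isomorphic to the
monoid generated by `i` and `ω` in `ℍ[ℚ]` (the elements of a finite submonoid of a group have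
finite order, so inverses come for free). That monoid consists of the products of at most five
generators, because multiplying these by one more generator yields nothing new; this
stabilisation and the count of 24 elements are finite computations in `ℍ[ℚ]`.
-/

open Matrix Complex Quaternion Pointwise

section Closure

variable {M N : Type*} [Monoid M] [Monoid N]

theorem Submonoid.coe_closure_eq_of_pow_succ_eq [DecidableEq M] {s : Finset M} {n : ℕ}
    (h : (1 ∪ s) ^ (n + 1) = (1 ∪ s) ^ n) :
    (Submonoid.closure (s : Set M) : Set M) = ↑((1 ∪ s) ^ n) := by
  refine subset_antisymm (fun x hx => ?_) ?_
  · induction hx using Submonoid.closure_induction_right with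
    | one => exact Finset.one_mem_pow (Finset.mem_union_left _ (Finset.mem_singleton_self 1))
    | mul_right x _ y hy ih =>
      rw [← h, pow_succ]
      exact Finset.mul_mem_mul ih (Finset.mem_union_right _ hy)
  · rw [Finset.coe_pow]
    refine Submonoid.pow_subset ?_
    simp [Submonoid.subset_closure]

theorem Submonoid.card_closure_eq_of_pow_succ_eq [DecidableEq M] {s : Finset M} {n : ℕ}
    (h : (1 ∪ s) ^ (n + 1) = (1 ∪ s) ^ n) :
    Nat.card (Submonoid.closure (s : Set M)) = ((1 ∪ s) ^ n).card := by
  rw [← SetLike.coe_sort_coe, Submonoid.coe_closure_eq_of_pow_succ_eq h, Nat.card_coe_set_eq,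
    Set.ncard_coe_finset]

theorem Submonoid.card_closure_image_of_injective {f : M →* N} (hf : Function.Injective f)
    (s : Set M) : Nat.card (Submonoid.closure (f '' s)) = Nat.card (Submonoid.closure s) := by
  rw [← MonoidHom.map_mclosure]
  exact Nat.card_congr ((Submonoid.closure s).equivMapOfInjective f hf).toEquiv.symm

theorem Subgroup.closure_toSubmonoid_of_finite_mclosure {G : Type*} [Group G] {s : Set G}
    (h : Finite (Submonoid.closure s)) :
    (Subgroup.closure s).toSubmonoid = Submonoid.closure s :=
  Subgroup.closure_toSubmonoid_of_isOfFinOrder fun _ hx =>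
    finite_powers.1 <| (Set.toFinite (Submonoid.closure s : Set G)).subset <|
      Submonoid.powers_le.2 (Submonoid.subset_closure hx)

end Closure

namespace Quaternion

instance : DecidableEq ℍ[ℚ] := fun p q =>
  decidable_of_iff (p.re = q.re ∧ p.imI = q.imI ∧ p.imJ = q.imJ ∧ p.imK = q.imK)
    QuaternionAlgebra.ext_iff.symm

def toMatrixComplex : ℍ[ℚ] →* Matrix (Fin 2) (Fin 2) ℂ where
  toFun q := !![q.re + q.imI * I, q.imJ + q.imK * I; -q.imJ + q.imK * I, q.re - q.imI * I]
  map_one' := by simp [one_fin_two]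
  map_mul' p q := by
    rw [Matrix.mul_fin_two]
    congr 3 <;>
      grind [I_sq, re_mul, imI_mul, imJ_mul, imK_mul, Rat.cast_add, Rat.cast_sub, Rat.cast_mul]

theorem toMatrixComplex_apply (q : ℍ[ℚ]) : toMatrixComplex q =
    !![q.re + q.imI * I, q.imJ + q.imK * I; -q.imJ + q.imK * I, q.re - q.imI * I] :=
  rfl

theorem toMatrixComplex_injective : Function.Injective toMatrixComplex := by
  intro p q h
  have h₀₀ := congrFun (congrFun h 0) 0
  have h₀₁ := congrFun (congrFun h 0) 1
  simp only [toMatrixComplex_apply, of_apply, cons_val', cons_val_zero, cons_val_one,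
    cons_val_fin_one, Complex.ext_iff, add_re, add_im, mul_re, mul_im, ratCast_re, ratCast_im, I_re,
    I_im, mul_zero, mul_one, sub_self, add_zero, zero_add, Rat.cast_inj] at h₀₀ h₀₁
  exact QuaternionAlgebra.ext h₀₀.1 h₀₀.2 h₀₁.1 h₀₁.2

def unitI : ℍ[ℚ] := ⟨0, 1, 0, 0⟩

def unitOmega : ℍ[ℚ] := ⟨-1/2, 1/2, -1/2, 1/2⟩

theorem toMatrixComplex_unitI : toMatrixComplex unitI = !![I, 0; 0, -I] := by
  rw [toMatrixComplex_apply, unitI]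
  congr 3 <;> simp

theorem toMatrixComplex_unitOmega : toMatrixComplex unitOmega =
    !![(I - 1) / 2, (I - 1) / 2; (I + 1) / 2, -(I + 1) / 2] := by
  rw [toMatrixComplex_apply, unitOmega, EmbeddingLike.apply_eq_iff_eq]
  simp only [vecCons_inj, and_true]
  push_cast
  refine ⟨⟨?_, ?_⟩, ?_, ?_⟩ <;> ring

end Quaternion

theorem stmt_9 (A B : Matrix.SpecialLinearGroup (Fin 2) ℂ)
    (hA : (A : Matrix (Fin 2) (Fin 2) ℂ) = !![I, 0; 0, -I])
    (hB : (B : Matrix (Fin 2) (Fin 2) ℂ) =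
      !![(I - 1) / 2, (I - 1) / 2; (I + 1) / 2, -(I + 1) / 2]) :
    Nat.card (Subgroup.closure {A, B}) = 24 := by
  have hAB : SpecialLinearGroup.coeMonoidHom '' {A, B} =
      toMatrixComplex '' ↑({unitI, unitOmega} : Finset ℍ[ℚ]) := by
    rw [Finset.coe_pair, Set.image_pair, Set.image_pair, SpecialLinearGroup.coeMonoidHom_apply,
      SpecialLinearGroup.coeMonoidHom_apply, hA, hB, toMatrixComplex_unitI,
      toMatrixComplex_unitOmega]
  have hcard : Nat.card (Submonoid.closure {A, B}) = 24 := by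
    rw [← Submonoid.card_closure_image_of_injective SpecialLinearGroup.coeMonoidHom_injective, hAB,
      Submonoid.card_closure_image_of_injective toMatrixComplex_injective,
      Submonoid.card_closure_eq_of_pow_succ_eq (n := 5) (by decide +kernel)]
    decide +kernel
  have : Finite (Submonoid.closure {A, B}) := Nat.finite_of_card_ne_zero (by rw [hcard]; norm_num)
  rw [← hcard, ← Subgroup.closure_toSubmonoid_of_finite_mclosure this]
  rfl
end

section
/- If r(s) satisfies r'' + (2/3)·(7s−27)/(s(4s−27)) · r' − (11/900)·1/(s(4s−27)) · r = 0, and s(t) = (t^2−t+1)^3/(t^2(t−1)^2), then x(t) = t^{1/3}(t−1)^{1/3}·r(s(t)) satisfies P\'epin's equation x'' + (21/100)·(t^2−t+1)/(t^2(t−1)^2)·x = 0, on any domain where all expressions are defined and analytic. -/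
open Filter in
private lemma aux_P (u : ℂ) : HasDerivAt (fun v : ℂ => v^2 - v + 1) (2*u-1) u := by
  have := ((hasDerivAt_pow 2 u).sub (hasDerivAt_id u)).add_const 1
  simpa using this

private lemma aux_S (u : ℂ) (hu0 : u ≠ 0) (hu1 : u - 1 ≠ 0) :
    HasDerivAt (fun v : ℂ => (v^2-v+1)^3/(v^2*(v-1)^2))
      ((u^2-u+1)^2*(2*u-1)*((u-2)*(u+1))/(u^3*(u-1)^3)) u := by
  have hN : HasDerivAt (fun v : ℂ => (v^2-v+1)^3) (3*(u^2-u+1)^2*(2*u-1)) u := by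
    simpa [mul_comm, mul_assoc] using (aux_P u).fun_pow 3
  have hD : HasDerivAt (fun v : ℂ => v^2*(v-1)^2)
      (2*u*(u-1)^2 + u^2*(2*(u-1))) u := by
    have h1 := hasDerivAt_pow 2 u
    have h2 : HasDerivAt (fun v : ℂ => (v-1)^2) (2*(u-1)) u := by
      simpa using ((hasDerivAt_id u).sub_const 1).fun_pow 2
    simpa using h1.fun_mul h2
  have hQ : u^2*(u-1)^2 ≠ 0 := mul_ne_zero (pow_ne_zero _ hu0) (pow_ne_zero _ hu1)
  have := hN.fun_div hD hQ
  refine this.congr_deriv ?_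
  field_simp
  ring

private lemma aux_G (u : ℂ) (hu0 : u ≠ 0) (hu1 : u - 1 ≠ 0) :
    HasDerivAt (fun v : ℂ => (v^2-v+1)^2*(2*v-1)*((v-2)*(v+1))/(v^3*(v-1)^3))
      (((((2*(u^2-u+1)*(2*u-1))*(2*u-1) + (u^2-u+1)^2*2)*((u-2)*(u+1)) + ((u^2-u+1)^2*(2*u-1))*((u+1)+(u-2))) * (u^3*(u-1)^3) - ((u^2-u+1)^2*(2*u-1)*((u-2)*(u+1))) * (3*u^2*(u-1)^3 + u^3*(3*(u-1)^2))) / (u^3*(u-1)^3)^2) u := by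
  have hA : HasDerivAt (fun v : ℂ => (v^2-v+1)^2*(2*v-1))
      ((2*(u^2-u+1)*(2*u-1))*(2*u-1) + (u^2-u+1)^2*2) u := by
    have h1 : HasDerivAt (fun v : ℂ => (v^2-v+1)^2) (2*(u^2-u+1)*(2*u-1)) u := by
      simpa [mul_comm, mul_assoc] using (aux_P u).fun_pow 2
    have h2 : HasDerivAt (fun v : ℂ => 2*v-1) 2 u := by
      simpa using ((hasDerivAt_id u).const_mul 2).sub_const 1
    exact h1.mul h2
  have hB : HasDerivAt (fun v : ℂ => (v-2)*(v+1)) ((u+1)+(u-2)) u := by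
    have h1 := (hasDerivAt_id u).sub_const 2
    have h2 := (hasDerivAt_id u).add_const 1
    have := h1.fun_mul h2
    simp only [id] at this
    exact this.congr_deriv (by ring)
  have hN := hA.mul hB
  have hD : HasDerivAt (fun v : ℂ => v^3*(v-1)^3)
      (3*u^2*(u-1)^3 + u^3*(3*(u-1)^2)) u := by
    have h1 := hasDerivAt_pow 3 u
    have h2 : HasDerivAt (fun v : ℂ => (v-1)^3) (3*(u-1)^2) u := by
      simpa using ((hasDerivAt_id u).sub_const 1).fun_pow 3
    simpa using h1.fun_mul h2
  have hQ : u^3*(u-1)^3 ≠ 0 := mul_ne_zero (pow_ne_zero _ hu0) (pow_ne_zero _ hu1)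
  exact hN.div hD hQ
set_option maxHeartbeats 4000000 in
set_option maxRecDepth 20000 in
/-- Pépin's equation via pullback of a standard equation:
if `r` solves the standard second-order ODE in the variable `s`, and
`f` is an analytic branch of `(t (t-1))^{1/3}`, then
`x t = f t * r (s t)` with `s t = (t²-t+1)³/(t²(t-1)²)` solves Pépin's equation. -/
theorem stmt_11 (U : Set ℂ) (hU : IsOpen U) (hconn : IsConnected U)
    (s : ℂ → ℂ) (hs : ∀ t, s t = (t ^ 2 - t + 1) ^ 3 / (t ^ 2 * (t - 1) ^ 2))
    (hU0 : ∀ t ∈ U, t ≠ 0 ∧ t ≠ 1 ∧ s t ≠ 0 ∧ s t ≠ 27 / 4)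
    (f : ℂ → ℂ) (hf : ∀ t ∈ U, AnalyticAt ℂ f t)
    (hbranch : ∀ t ∈ U, f t ^ 3 = t * (t - 1))
    (r : ℂ → ℂ) (hr : ∀ t ∈ U, AnalyticAt ℂ r (s t))
    (hODE : ∀ t ∈ U,
      deriv (deriv r) (s t)
        + 2 / 3 * (7 * s t - 27) / (s t * (4 * s t - 27)) * deriv r (s t)
        - 11 / 900 * (1 / (s t * (4 * s t - 27))) * r (s t) = 0) :
    ∀ t ∈ U,
      deriv (deriv fun u => f u * r (s u)) t
        + 21 / 100 * ((t ^ 2 - t + 1) / (t ^ 2 * (t - 1) ^ 2))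
          * (f t * r (s t)) = 0 := by
  obtain rfl : s = fun t : ℂ => (t ^ 2 - t + 1) ^ 3 / (t ^ 2 * (t - 1) ^ 2) := funext hs
  simp only at hU0 hr hODE ⊢
  -- nonvanishing of f on U
  have hfne : ∀ u ∈ U, f u ≠ 0 := by
    intro u hu h0
    obtain ⟨h1, h2, -, -⟩ := hU0 u hu
    have h3 : u * (u - 1) = 0 := by rw [← hbranch u hu, h0]; ring
    rcases mul_eq_zero.mp h3 with h | h
    · exact h1 h
    · exact h2 (by linear_combination h)
  -- derivative of f on U
  have hfd : ∀ u ∈ U, HasDerivAt f ((2 * u - 1) / (3 * f u ^ 2)) u := by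
    intro u hu
    have hfu := hfne u hu
    have hd : HasDerivAt f (deriv f u) u := (hf u hu).differentiableAt.hasDerivAt
    have h3 : HasDerivAt (fun v => f v ^ 3) (3 * f u ^ 2 * deriv f u) u := by
      have := hd.fun_pow 3
      exact this.congr_deriv (by ring)
    have h4 : HasDerivAt (fun v : ℂ => v * (v - 1)) (2 * u - 1) u := by
      have := (hasDerivAt_id u).fun_mul ((hasDerivAt_id u).sub_const 1)
      simp only [id] at this
      exact this.congr_deriv (by ring)
    have heq : (fun v => f v ^ 3) =ᶠ[nhds u] fun v : ℂ => v * (v - 1) := by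
      filter_upwards [hU.mem_nhds hu] with v hv using hbranch v hv
    have h5 : HasDerivAt (fun v : ℂ => v * (v - 1)) (3 * f u ^ 2 * deriv f u) u :=
      h3.congr_of_eventuallyEq heq.symm
    have h6 : 3 * f u ^ 2 * deriv f u = 2 * u - 1 := h5.unique h4
    have hne : (3 : ℂ) * f u ^ 2 ≠ 0 := by
      simp [pow_eq_zero_iff, hfu]
    have h7 : deriv f u = (2 * u - 1) / (3 * f u ^ 2) := by
      rw [eq_div_iff hne]; linear_combination h6
    exact h7 ▸ hd
  -- first derivative of x on U
  have hx : ∀ u ∈ U, HasDerivAt (fun v => f v * r ((v ^ 2 - v + 1) ^ 3 / (v ^ 2 * (v - 1) ^ 2)))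
      ((2 * u - 1) / (3 * f u ^ 2) * r ((u ^ 2 - u + 1) ^ 3 / (u ^ 2 * (u - 1) ^ 2))
        + f u * (deriv r ((u ^ 2 - u + 1) ^ 3 / (u ^ 2 * (u - 1) ^ 2))
            * ((u ^ 2 - u + 1) ^ 2 * (2 * u - 1) * ((u - 2) * (u + 1)) / (u ^ 3 * (u - 1) ^ 3)))) u := by
    intro u hu
    obtain ⟨hu0, hu1, -, -⟩ := hU0 u hu
    have hSd := aux_S u hu0 (sub_ne_zero.mpr hu1)
    have hrd : HasDerivAt r (deriv r ((u ^ 2 - u + 1) ^ 3 / (u ^ 2 * (u - 1) ^ 2)))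
        ((u ^ 2 - u + 1) ^ 3 / (u ^ 2 * (u - 1) ^ 2)) :=
      (hr u hu).differentiableAt.hasDerivAt
    have hcomp := hrd.comp u hSd
    exact (hfd u hu).mul hcomp
  intro t ht
  obtain ⟨ht0, ht1, hS0, hS27⟩ := hU0 t ht
  have ht1' : (t : ℂ) - 1 ≠ 0 := sub_ne_zero.mpr ht1
  have hat : f t ≠ 0 := hfne t ht
  -- second derivative
  have hde : deriv (fun v => f v * r ((v ^ 2 - v + 1) ^ 3 / (v ^ 2 * (v - 1) ^ 2)))
      =ᶠ[nhds t] fun u =>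
        (2 * u - 1) / (3 * f u ^ 2) * r ((u ^ 2 - u + 1) ^ 3 / (u ^ 2 * (u - 1) ^ 2))
        + f u * (deriv r ((u ^ 2 - u + 1) ^ 3 / (u ^ 2 * (u - 1) ^ 2))
            * ((u ^ 2 - u + 1) ^ 2 * (2 * u - 1) * ((u - 2) * (u + 1)) / (u ^ 3 * (u - 1) ^ 3))) := by
    filter_upwards [hU.mem_nhds ht] with u hu using (hx u hu).deriv
  have hSd := aux_S t ht0 ht1'
  have hGd := aux_G t ht0 ht1'
  have hne3 : (3 : ℂ) * f t ^ 2 ≠ 0 := by simp [pow_eq_zero_iff, hat]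
  have hnum : HasDerivAt (fun v : ℂ => 2 * v - 1) 2 t := by
    simpa using ((hasDerivAt_id t).const_mul 2).sub_const 1
  have hP2 : HasDerivAt (fun v => 3 * f v ^ 2)
      (3 * (2 * f t * ((2 * t - 1) / (3 * f t ^ 2)))) t := by
    have := ((hfd t ht).fun_pow 2).const_mul 3
    exact this.congr_deriv (by ring)
  have hquot := hnum.fun_div hP2 hne3
  have hrd : HasDerivAt r (deriv r ((t ^ 2 - t + 1) ^ 3 / (t ^ 2 * (t - 1) ^ 2)))
      ((t ^ 2 - t + 1) ^ 3 / (t ^ 2 * (t - 1) ^ 2)) :=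
    (hr t ht).differentiableAt.hasDerivAt
  have hrS := hrd.comp t hSd
  have hA := hquot.fun_mul hrS
  have hr2d : HasDerivAt (deriv r) (deriv (deriv r) ((t ^ 2 - t + 1) ^ 3 / (t ^ 2 * (t - 1) ^ 2)))
      ((t ^ 2 - t + 1) ^ 3 / (t ^ 2 * (t - 1) ^ 2)) := by
    obtain ⟨v, hv, hva⟩ := (hr t ht).exists_mem_nhds_analyticOnNhd
    exact (((hva.deriv) _ (mem_of_mem_nhds hv)).differentiableAt).hasDerivAt
  have hrS2 := hr2d.comp t hSd
  have hB := (hfd t ht).fun_mul (hrS2.fun_mul hGd)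
  have hx1d := hA.fun_add hB
  simp only [Function.comp_apply] at hx1d
  rw [hde.deriv_eq, hx1d.deriv]
  have hb := hbranch t ht
  have hO := hODE t ht
  have hPne : (t ^ 2 - t + 1 : ℂ) ≠ 0 := by
    intro h
    apply hS0
    rw [h]
    simp
  have hW : (4 * (t ^ 2 - t + 1) ^ 3 - 27 * (t ^ 2 * (t - 1) ^ 2) : ℂ) ≠ 0 := by
    intro h
    apply hS27
    field_simp
    linear_combination h
  have hW' : (4 * (t ^ 2 - t + 1) ^ 3 - t ^ 2 * (t - 1) ^ 2 * 27 : ℂ) ≠ 0 := by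
    intro h; exact hW (by linear_combination h)
  clear hde hx1d hA hB hrS hrS2 hquot hP2 hnum hSd hGd hrd hr2d hx hfd hfne hU0 hr hODE hs hf hbranch
  have hOp : 900 * (t ^ 2 - t + 1) ^ 3 * (4 * (t ^ 2 - t + 1) ^ 3 - 27 * (t ^ 2 * (t - 1) ^ 2)) * deriv (deriv r) ((t ^ 2 - t + 1) ^ 3 / (t ^ 2 * (t - 1) ^ 2)) + 600 * (7 * (t ^ 2 - t + 1) ^ 3 - 27 * (t ^ 2 * (t - 1) ^ 2)) * (t ^ 2 * (t - 1) ^ 2) * deriv r ((t ^ 2 - t + 1) ^ 3 / (t ^ 2 * (t - 1) ^ 2)) - 11 * (t ^ 2 * (t - 1) ^ 2) ^ 2 * r ((t ^ 2 - t + 1) ^ 3 / (t ^ 2 * (t - 1) ^ 2)) = 0 := by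
    have hSQ : (t ^ 2 - t + 1) ^ 3 / (t ^ 2 * (t - 1) ^ 2) * (t ^ 2 * (t - 1) ^ 2) = (t ^ 2 - t + 1) ^ 3 := by field_simp
    have h4 : 4 * ((t ^ 2 - t + 1) ^ 3 / (t ^ 2 * (t - 1) ^ 2)) - 27 ≠ 0 := by
      intro h; apply hS27; linear_combination h / 4
    generalize (t ^ 2 - t + 1) ^ 3 / (t ^ 2 * (t - 1) ^ 2) = S at hO hS0 hSQ h4 ⊢
    have e1 : S * (4 * S - 27) * deriv (deriv r) S + 2 / 3 * (7 * S - 27) * deriv r S - 11 / 900 * r S = S * (4 * S - 27) * (deriv (deriv r) S + 2 / 3 * (7 * S - 27) / (S * (4 * S - 27)) * deriv r S - 11 / 900 * (1 / (S * (4 * S - 27))) * r S) := by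
      have hinv : S * (4 * S - 27) * (S * (4 * S - 27))⁻¹ = 1 := mul_inv_cancel₀ (mul_ne_zero hS0 h4)
      linear_combination (-(2 / 3 * (7 * S - 27) * deriv r S - 11 / 900 * r S)) * hinv
    have hO1 : S * (4 * S - 27) * deriv (deriv r) S + 2 / 3 * (7 * S - 27) * deriv r S - 11 / 900 * r S = 0 := by
      rw [e1, hO, mul_zero]
    linear_combination (900 * (t ^ 2 * (t - 1) ^ 2) ^ 2) * hO1 - (900 * deriv (deriv r) S * (4 * ((t ^ 2 - t + 1) ^ 3 + S * (t ^ 2 * (t - 1) ^ 2)) - 27 * (t ^ 2 * (t - 1) ^ 2)) + 4200 * (t ^ 2 * (t - 1) ^ 2) * deriv r S) * hSQ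
  generalize deriv (deriv r) ((t ^ 2 - t + 1) ^ 3 / (t ^ 2 * (t - 1) ^ 2)) = R2 at hOp ⊢
  generalize deriv r ((t ^ 2 - t + 1) ^ 3 / (t ^ 2 * (t - 1) ^ 2)) = R1 at hOp ⊢
  generalize r ((t ^ 2 - t + 1) ^ 3 / (t ^ 2 * (t - 1) ^ 2)) = R0 at hOp ⊢
  generalize f t = F at hat hb ⊢
  have key : ((2 * (3 * F ^ 2) - (2 * t - 1) * (3 * (2 * F * ((2 * t - 1) / (3 * F ^ 2))))) / (3 * F ^ 2) ^ 2 * R0 + ((2 * t - 1) / (3 * F ^ 2)) * (R1 * ((t ^ 2 - t + 1) ^ 2 * (2 * t - 1) * ((t - 2) * (t + 1)) / (t ^ 3 * (t - 1) ^ 3))) + (((2 * t - 1) / (3 * F ^ 2)) * (R1 * ((t ^ 2 - t + 1) ^ 2 * (2 * t - 1) * ((t - 2) * (t + 1)) / (t ^ 3 * (t - 1) ^ 3))) + F * ((R2 * ((t ^ 2 - t + 1) ^ 2 * (2 * t - 1) * ((t - 2) * (t + 1)) / (t ^ 3 * (t - 1) ^ 3))) * ((t ^ 2 - t + 1) ^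 2 * (2 * t - 1) * ((t - 2) * (t + 1)) / (t ^ 3 * (t - 1) ^ 3)) + R1 * (((((2*(t^2-t+1)*(2*t-1))*(2*t-1) + (t^2-t+1)^2*2)*((t-2)*(t+1)) + ((t^2-t+1)^2*(2*t-1))*((t+1)+(t-2))) * (t^3*(t-1)^3) - ((t^2-t+1)^2*(2*t-1)*((t-2)*(t+1))) * (3*t^2*(t-1)^3 + t^3*(3*(t-1)^2))) / (t^3*(t-1)^3)^2))) + 21 / 100 * ((t ^ 2 - t + 1) / (t ^ 2 * (t - 1) ^ 2)) * (F * R0)) * (900 * (t ^ 2 - t + 1) ^ 3 * (4 * (t ^ 2 - t + 1) ^ 3 - 27 * (t ^ 2 * (t - 1) ^ 2)) * (F ^ 5 * t ^ 6 * (t - 1) ^ 6)) = 0 := by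
    have e : ((2 * (3 * F ^ 2) - (2 * t - 1) * (3 * (2 * F * ((2 * t - 1) / (3 * F ^ 2))))) / (3 * F ^ 2) ^ 2 * R0 + ((2 * t - 1) / (3 * F ^ 2)) * (R1 * ((t ^ 2 - t + 1) ^ 2 * (2 * t - 1) * ((t - 2) * (t + 1)) / (t ^ 3 * (t - 1) ^ 3))) + (((2 * t - 1) / (3 * F ^ 2)) * (R1 * ((t ^ 2 - t + 1) ^ 2 * (2 * t - 1) * ((t - 2) * (t + 1)) / (t ^ 3 * (t - 1) ^ 3))) + F * ((R2 * ((t ^ 2 - t + 1) ^ 2 * (2 * t - 1) * ((t - 2) * (t + 1)) / (t ^ 3 * (t - 1) ^ 3))) * ((t ^ 2 - t + 1) ^ 2 * (2 * t - 1) * ((t - 2) * (t + 1)) / (t ^ 3 * (t - 1) ^ 3)) + R1 * (((((2*(t^2-t+1)*(2*t-1))*(2*t-1) + (t^2-t+1)^2*2)*((t-2)*(t+1)) + ((t^2-t+1)^2*(2*t-1))*((t+1)+(t-2))) * (t^3*(t-1)^3) - ((t^2-t+1)^2*(2*t-1)*((t-2)*(t+1))) * (3*t^2*(t-1)^3 +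 t^3*(3*(t-1)^2))) / (t^3*(t-1)^3)^2))) + 21 / 100 * ((t ^ 2 - t + 1) / (t ^ 2 * (t - 1) ^ 2)) * (F * R0)) * (900 * (t ^ 2 - t + 1) ^ 3 * (4 * (t ^ 2 - t + 1) ^ 3 - 27 * (t ^ 2 * (t - 1) ^ 2)) * (F ^ 5 * t ^ 6 * (t - 1) ^ 6)) = F ^ 6 * ((t ^ 2 - t + 1) ^ 2 * (2 * t - 1) * ((t - 2) * (t + 1))) ^ 2 * (900 * (t ^ 2 - t + 1) ^ 3 * (4 * (t ^ 2 - t + 1) ^ 3 - 27 * (t ^ 2 * (t - 1) ^ 2)) * R2 + 600 * (7 * (t ^ 2 - t + 1) ^ 3 - 27 * (t ^ 2 * (t - 1) ^ 2)) * (t ^ 2 * (t - 1) ^ 2) * R1 - 11 * (t ^ 2 * (t - 1) ^ 2) ^ 2 * R0) + ((4800)*t^2*F^3*R1 + (-64800)*t^3*F^3*R1 + (397200)*t^4*F^3*R1 + (800)*t^4*F^3*R0 + (-800)*t^5*R0 + (-1459800)*t^5*F^3*R1 + (-8800)*t^5*F^3*R0 + (12000)*t^6*R0 + (3532800)*t^6*F^3*R1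 + (44200)*t^6*F^3*R0 + (-81800)*t^7*R0 + (-5641200)*t^7*F^3*R1 + (-134000)*t^7*F^3*R0 + (334800)*t^8*R0 + (4991400)*t^8*F^3*R1 + (268200)*t^8*F^3*R0 + (-910400)*t^9*R0 + (1130400)*t^9*F^3*R1 + (-350400)*t^9*F^3*R0 + (1695000)*t^10*R0 + (-11419200)*t^10*F^3*R1 + (234400)*t^10*F^3*R0 + (-2062600)*t^11*R0 + (19028400)*t^11*F^3*R1 + (124000)*t^11*F^3*R0 + (1166400)*t^12*R0 + (-16365600)*t^12*F^3*R1 + (-547600)*t^12*F^3*R0 + (1119800)*t^13*R0 + (2932800)*t^13*F^3*R1 + (738400)*t^13*F^3*R0 + (-3577400)*t^14*R0 + (12582000)*t^14*F^3*R1 + (-547600)*t^14*F^3*R0 + (4419200)*t^15*R0 + (-19588800)*t^15*F^3*R1 + (124000)*t^15*F^3*R0 + (-2963000)*t^16*R0 + (14943600)*t^16*F^3*R1 + (234400)*t^16*F^3*R0 + (337800)*t^17*R0 + (-4512600)*t^17*F^3*R1 + (-350400)*t^17*F^3*R0 + (1640800)*t^18*R0 + (-3621600)*t^18*F^3*R1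 + (268200)*t^18*F^3*R0 + (-2096400)*t^19*R0 + (6001200)*t^19*F^3*R1 + (-134000)*t^19*F^3*R0 + (1478600)*t^20*R0 + (-4407000)*t^20*F^3*R1 + (44200)*t^20*F^3*R0 + (-686400)*t^21*R0 + (2059200)*t^21*F^3*R1 + (-8800)*t^21*F^3*R0 + (209600)*t^22*R0 + (-628800)*t^22*F^3*R1 + (800)*t^22*F^3*R0 + (-38400)*t^23*R0 + (115200)*t^23*F^3*R1 + (3200)*t^24*R0 + (-9600)*t^24*F^3*R1) * (F ^ 3 - t * (t - 1)) := by
      field_simp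
      ring
    rw [e, hOp, hb]
    ring
  have hne : (900 * (t ^ 2 - t + 1) ^ 3 * (4 * (t ^ 2 - t + 1) ^ 3 - 27 * (t ^ 2 * (t - 1) ^ 2)) * (F ^ 5 * t ^ 6 * (t - 1) ^ 6)) ≠ 0 :=
    mul_ne_zero (mul_ne_zero (mul_ne_zero (by norm_num) (pow_ne_zero _ hPne)) hW) (mul_ne_zero (mul_ne_zero (pow_ne_zero _ hat) (pow_ne_zero _ ht0)) (pow_ne_zero _ ht1'))
  have hE := (mul_eq_zero.mp key).resolve_right hne
  linear_combination hE
end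

section
/- For the family of cubics p_λ(t) = 4t^3 − λ^2 t^2 + 18λ t − 4λ^3 + 27 ∈ ℂ[t], for each λ with λ^3 = −27 the polynomial p_λ(t) has exactly two distinct complex roots (one of multiplicity 2), while for λ^3 ≠ −27 it has three distinct roots. -/
open Polynomial

theorem stmt_15 (l : ℂ)
    (p : Polynomial ℂ)
    (hp : p = C 4 * X ^ 3 - C (l ^ 2) * X ^ 2 + C (18 * l) * X + C (27 - 4 * l ^ 3)) :
    (l ^ 3 = -27 →
      p.roots.toFinset.card = 2 ∧ ∃ α : ℂ, p.rootMultiplicity α = 2) ∧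
    (l ^ 3 ≠ -27 → p.roots.toFinset.card = 3) := by
  have hdeg3 : p.natDegree = 3 := by
    rw [hp]
    compute_degree!
  have hp0 : p ≠ 0 := by
    intro h0
    rw [h0] at hdeg3
    simp at hdeg3
  constructor
  · -- case l^3 = -27
    intro h
    have hl0 : l ≠ 0 := by
      intro h0
      rw [h0] at h
      norm_num at h
    set r : ℂ := l ^ 2 / 3 with hr
    set s : ℂ := -5 * l ^ 2 / 12 with hs
    have hrs : r ≠ s := by
      rw [hr, hs]
      intro hh
      apply hl0
      have h2 : l ^ 2 = 0 := by linear_combination (4 / 3 : ℂ) * hh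
      exact pow_eq_zero_iff (n := 2) (by norm_num) |>.mp h2
    have hfact : p = C 4 * ((X - C r) ^ 2 * (X - C s)) := by
      apply Polynomial.funext
      intro x
      simp only [hp, hr, hs, eval_add, eval_sub, eval_mul, eval_pow, eval_C, eval_X]
      linear_combination ((2 * l / 3) * x - (5 * l ^ 3 - 27) / 27) * h
    have hroots : p.roots = {r, r, s} := by
      rw [hfact]
      rw [roots_C_mul _ (by norm_num : (4 : ℂ) ≠ 0)]
      rw [roots_mul (by
        apply mul_ne_zero
        · exact pow_ne_zero _ (X_sub_C_ne_zero r)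
        · exact X_sub_C_ne_zero s)]
      rw [roots_pow, roots_X_sub_C, roots_X_sub_C]
      rfl
    constructor
    · rw [hroots]
      have : ({r, r, s} : Multiset ℂ).toFinset = {r, s} := by
        simp
      rw [this]
      rw [Finset.card_insert_of_notMem (by simp [hrs])]
      simp
    · refine ⟨r, ?_⟩
      have := Polynomial.count_roots (a := r) p
      rw [hroots] at this
      rw [← this]
      rw [show ({r, r, s} : Multiset ℂ) = r ::ₘ r ::ₘ {s} from rfl]
      simp [Multiset.count_cons, Multiset.count_singleton, hrs]
  · -- case l^3 ≠ -27
    intro h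
    have hcard : Multiset.card p.roots = 3 := by
      have hsplit : Splits p := IsAlgClosed.splits p
      exact (Polynomial.splits_iff_card_roots.mp hsplit).trans hdeg3
    have hnodup : p.roots.Nodup := by
      rw [Multiset.nodup_iff_count_le_one]
      intro a
      by_contra hcnt
      push_neg at hcnt
      have h2 : 2 ≤ p.rootMultiplicity a := by
        rw [← Polynomial.count_roots]
        omega
      have hdvd : (X - C a) ^ 2 ∣ p :=
        dvd_trans (pow_dvd_pow _ h2) (Polynomial.pow_rootMultiplicity_dvd p a)
      obtain ⟨q, hq⟩ := hdvd
      have E1 : 4 * a ^ 3 - l ^ 2 * a ^ 2 + 18 * l * a + (27 - 4 * l ^ 3) = 0 := by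
        have : p.eval a = 0 := by
          rw [hq]
          simp
        rw [hp] at this
        simp at this
        linear_combination this
      have E2 : 12 * a ^ 2 - 2 * l ^ 2 * a + 18 * l = 0 := by
        have hder : (derivative p).eval a = 0 := by
          rw [hq]
          simp [derivative_mul, derivative_pow]
        rw [hp] at hder
        simp [derivative_mul, derivative_pow] at hder
        linear_combination hder
      have : (l ^ 3 + 27) ^ 3 = 0 := by
        linear_combination ((5832 - 324*l^3 - 2*l^6) + (-2592*l + 12*l^4)*a)/8 * E1 +
          ((2754*l^2 - 33*l^5) + (-1944 + 36*l^3 + l^6)*a + (864*l - 4*l^4)*a^2)/8 * E2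
      have hl : l ^ 3 + 27 = 0 := pow_eq_zero_iff (by norm_num) |>.mp this
      exact h (by linear_combination hl)
    rw [Multiset.toFinset_card_of_nodup hnodup, hcard]
end

section
/- The discriminant criterion for the deformed Hesse family: the polynomial (in λ) q_t(λ) = (t^3 + 9λt + 54)(λ^2 t^2 + 4λ^3 − 4t^3 − 18λt − 27) has a repeated root (over ℂ) if and only if (5t^3 − 864)(t^3 − 27) = 0, for t ≠ 0. -/
open Polynomial

/-!
Write `q_t = L_t * Q_t` with `L_t` linear and `Q_t` cubic. As `L_t' = 9t ≠ 0`, a repeated root of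
`q_t` is either a common root of `L_t` and `Q_t` or a double root of `Q_t`. The only root of `L_t`
is `-(t³ + 54) / (9t)`, where `729 t³ Q_t = (5t³ - 864)(t³ - 27)²`. A double root of `Q_t` makes its
discriminant `16 (t³ - 27)³` vanish, so that case is already covered by the first one.
-/

theorem Polynomial.eval_mul_and_eval_derivative_mul_eq_zero_iff {R : Type*} [CommRing R]
    [NoZeroDivisors R] {f g : R[X]} {a : R} :
    (f * g).eval a = 0 ∧ (derivative (f * g)).eval a = 0 ↔
      (f.eval a = 0 ∧ g.eval a = 0) ∨ (f.eval a = 0 ∧ (derivative f).eval a = 0) ∨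
        (g.eval a = 0 ∧ (derivative g).eval a = 0) := by
  simp only [eval_mul, derivative_mul, eval_add, mul_eq_zero]
  constructor
  · rintro ⟨hf | hg, h'⟩
    · simp only [hf, zero_mul, add_zero, mul_eq_zero] at h'
      tauto
    · simp only [hg, mul_zero, zero_add, mul_eq_zero] at h'
      tauto
  · rintro (⟨hf, hg⟩ | ⟨hf, hf'⟩ | ⟨hg, hg'⟩) <;> simp [*]

theorem Cubic.discr_eq_zero_of_eval_derivative_eq_zero {R : Type*} [CommRing R] (P : Cubic R)
    {α : R} (h : P.toPoly.eval α = 0) (h' : (derivative P.toPoly).eval α = 0) : P.discr = 0 := by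
  obtain ⟨a, b, c, d⟩ := P
  simp only [Cubic.toPoly, eval_add, eval_mul, eval_C, eval_pow, eval_X, derivative_add,
    derivative_mul, derivative_C, derivative_X_pow, derivative_X, zero_mul, zero_add, add_zero,
    mul_one] at h h'
  -- a double root `α` pins down `c` and `d`, making `P = (X - α) ^ 2 * (a * X + b + 2 * a * α)`
  have hc : c = -3 * a * α ^ 2 - 2 * b * α := by linear_combination h'
  have hd : d = 2 * a * α ^ 3 + b * α ^ 2 := by linear_combination h - α * h'
  simp only [Cubic.discr, hc, hd]
  ring

namespace Hesse

noncomputable def linearFactor (t : ℂ) : ℂ[X] := C (t ^ 3 + 54) + C (9 * t) * X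

def cubicFactor (t : ℂ) : Cubic ℂ := ⟨4, t ^ 2, -(18 * t), -(4 * t ^ 3 + 27)⟩

variable {t : ℂ}

theorem cubicFactor_toPoly (t : ℂ) : (cubicFactor t).toPoly =
    C 4 * X ^ 3 + C (t ^ 2) * X ^ 2 - C (18 * t) * X - C (4 * t ^ 3 + 27) := by
  simp only [cubicFactor, Cubic.toPoly, C_neg, neg_mul, ← sub_eq_add_neg]

theorem cubicFactor_discr (t : ℂ) : (cubicFactor t).discr = 16 * (t ^ 3 - 27) ^ 3 := by
  simp only [cubicFactor, Cubic.discr]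
  ring

theorem derivative_linearFactor (t : ℂ) : derivative (linearFactor t) = C (9 * t) := by
  simp [linearFactor]

theorem eval_linearFactor_eq_zero_iff (ht : t ≠ 0) {α : ℂ} :
    (linearFactor t).eval α = 0 ↔ α = -(t ^ 3 + 54) / (9 * t) := by
  have h9t : (9 : ℂ) * t ≠ 0 := mul_ne_zero (by norm_num) ht
  simp only [linearFactor, eval_add, eval_mul, eval_C, eval_X]
  rw [eq_div_iff h9t]
  constructor <;> intro h <;> linear_combination h

theorem eval_cubicFactor_root_linearFactor (ht : t ≠ 0) :
    729 * t ^ 3 * (cubicFactor t).toPoly.eval (-(t ^ 3 + 54) / (9 * t)) =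
      (5 * t ^ 3 - 864) * (t ^ 3 - 27) ^ 2 := by
  simp only [cubicFactor, Cubic.toPoly, eval_add, eval_mul, eval_C, eval_pow, eval_X]
  field_simp
  ring

theorem exists_common_root_iff (ht : t ≠ 0) :
    (∃ α, (linearFactor t).eval α = 0 ∧ (cubicFactor t).toPoly.eval α = 0) ↔
      (5 * t ^ 3 - 864) * (t ^ 3 - 27) = 0 := by
  simp_rw [eval_linearFactor_eq_zero_iff ht, exists_eq_left]
  have h729 : (729 : ℂ) * t ^ 3 ≠ 0 := mul_ne_zero (by norm_num) (pow_ne_zero 3 ht)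
  rw [← mul_right_inj' h729, eval_cubicFactor_root_linearFactor ht, mul_zero]
  simp only [mul_eq_zero, pow_eq_zero_iff two_ne_zero]

theorem cube_eq_of_isDoubleRoot_cubicFactor {α : ℂ} (h : (cubicFactor t).toPoly.eval α = 0)
    (h' : (derivative (cubicFactor t).toPoly).eval α = 0) : t ^ 3 = 27 := by
  have hdiscr := (cubicFactor t).discr_eq_zero_of_eval_derivative_eq_zero h h'
  rw [cubicFactor_discr] at hdiscr
  simpa [sub_eq_zero] using hdiscr

end Hesse

open Hesse

theorem stmt_18 (t : ℂ) (ht : t ≠ 0)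
    (q : Polynomial ℂ)
    (hq : q = (C (t ^ 3 + 54) + C (9 * t) * X) *
      (C 4 * X ^ 3 + C (t ^ 2) * X ^ 2 - C (18 * t) * X - C (4 * t ^ 3 + 27))) :
    (∃ α : ℂ, q.eval α = 0 ∧ (Polynomial.derivative q).eval α = 0) ↔
      (5 * t ^ 3 - 864) * (t ^ 3 - 27) = 0 := by
  rw [← cubicFactor_toPoly] at hq
  change q = linearFactor t * (cubicFactor t).toPoly at hq
  subst hq
  rw [← exists_common_root_iff ht]
  simp_rw [eval_mul_and_eval_derivative_mul_eq_zero_iff, derivative_linearFactor, eval_C]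
  constructor
  · rintro ⟨α, hcommon | ⟨-, h9t⟩ | ⟨hQ, hQ'⟩⟩
    · exact ⟨α, hcommon⟩
    · exact absurd h9t (mul_ne_zero (by norm_num) ht)
    · exact (exists_common_root_iff ht).2 (by rw [cube_eq_of_isDoubleRoot_cubicFactor hQ hQ']; ring)
  · rintro ⟨α, hcommon⟩
    exact ⟨α, Or.inl hcommon⟩
end
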